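/- arXiv:1008.4740 — 2 statements merged into one kernel-verified Lean document; each statement's English description precedes it below -/
import Mathlib

section
/- For m ≥ 1 and 1 ≤ i ≤ m-1, define D_i(m) = C(2m, m-i) * m! * i! * (m-i)! * 2^i * d_i(m). Then (1/2)(m+i+1) D_{i+1}(m) + 2(m-i+1) D_{i-1}(m) = (2m+1) D_i(m). -/
open Finset

/-- The Boros-Moll coefficient `d_i(m)`. -/
def bmCoeff (m i : ℕ) : ℚ :=
  (∑ k ∈ Finset.Icc i m,
    (2:ℚ)^k * (Nat.choose (2*m-2*k) (m-k)) * (Nat.choose (m+k) k) * (Nat.choose k i)) / 2^(2*m)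

/-- The rescaled coefficient `D_i(m)`. -/
def bmD (m i : ℕ) : ℚ :=
  (Nat.choose (2*m) (m-i)) * (Nat.factorial m) * (Nat.factorial i) *
    (Nat.factorial (m-i)) * 2^i * bmCoeff m i

/-!
Since `C(2m, m-i) (m-i)! = (2m)! / (m+i)!`, we have `D_i(m) = (2m)! m! 2^i i! / (m+i)! · d_i(m)`,
so the claim is a rescaling of the three-term recurrence
`(j+1)(j+2) S_{j+2} + (m-j)(m+j+1) S_j = (2m+1)(j+1) S_{j+1}` for `S_j = 4^m d_j(m) = ∑ₖ tₖ C(k, j)`,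
`tₖ = 2^k C(2m-2k, m-k) C(m+k, k)`. That recurrence is proved by creative telescoping: the
combination of summands is `Fₖ - Gₖ` with `Fₖ = (m-k)(m+k+1) tₖ C(k, j)` and
`Gₖ = (2m+1-2k)(j+1) tₖ C(k, j+1)`. The ratio `t_{k+1}/tₖ` gives `Fₖ = G_{k+1}` for `k < m`, and
`F_m = G_0 = 0`, so the sum over `k ≤ m` vanishes.
-/

theorem Nat.cast_choose_succ_right_eq {R : Type*} [Ring R] (n k : ℕ) :
    (n.choose (k + 1) : R) * (k + 1) = n.choose k * (n - k) := by
  rcases lt_or_ge n k with h | h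
  · simp [Nat.choose_eq_zero_of_lt h, Nat.choose_eq_zero_of_lt (Nat.lt_succ_of_lt h)]
  · simpa [Nat.cast_sub h] using congrArg (Nat.cast : ℕ → R) (Nat.choose_succ_right_eq n k)

theorem cast_choose_three_term_eq {R : Type*} [CommRing R] (m j k : ℕ) :
    ((j : R) + 1) * (j + 2) * k.choose (j + 2) + (m - j) * (m + j + 1) * k.choose j
        - (2 * m + 1) * (j + 1) * k.choose (j + 1) =
      (m - k) * (m + k + 1) * k.choose j - (2 * m + 1 - 2 * k) * (j + 1) * k.choose (j + 1) := by
  have h₀ := Nat.cast_choose_succ_right_eq (R := R) k j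
  have h₁ := Nat.cast_choose_succ_right_eq (R := R) k (j + 1)
  push_cast at h₁
  linear_combination (j + 1 : R) * h₁ - (k + j + 1 : R) * h₀

def bmTerm (m k : ℕ) : ℚ := 2 ^ k * (m - k).centralBinom * (m + k).choose k

def bmSum (m j : ℕ) : ℚ := ∑ k ∈ range (m + 1), bmTerm m k * k.choose j

theorem bmCoeff_eq_bmSum (m j : ℕ) : bmCoeff m j = bmSum m j / 2 ^ (2 * m) := by
  rw [bmCoeff, bmSum]
  congr 1
  refine sum_subset (fun k hk => ?_) (fun k hk hkj => ?_) |>.trans (sum_congr rfl fun k _ => ?_)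
  · simp only [mem_Icc, mem_range] at hk ⊢
    omega
  · simp only [mem_Icc, mem_range, not_and, not_le] at hk hkj
    simp [Nat.choose_eq_zero_of_lt (show k < j by omega)]
  · rw [bmTerm, Nat.centralBinom, Nat.mul_sub]

theorem bmTerm_succ {m k : ℕ} (hk : k < m) :
    ((k : ℚ) + 1) * (2 * m - 2 * k - 1) * bmTerm m (k + 1) =
      (m - k) * (m + k + 1) * bmTerm m k := by
  obtain ⟨n, rfl⟩ : ∃ n, m = k + 1 + n := ⟨m - (k + 1), by omega⟩
  have hc : ((n + 1 : ℕ) : ℚ) * (n + 1).centralBinom = 2 * (2 * n + 1) * n.centralBinom := by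
    exact_mod_cast Nat.succ_mul_centralBinom_succ n
  have hb : ((k + 1 + n + (k + 1)).choose (k + 1) : ℚ) * (k + 1) =
      (k + 1 + n + k + 1) * (k + 1 + n + k).choose k := by
    exact_mod_cast (Nat.add_one_mul_choose_eq (k + 1 + n + k) k).symm
  simp only [bmTerm, show k + 1 + n - (k + 1) = n by omega, show k + 1 + n - k = n + 1 by omega]
  push_cast at hc ⊢
  linear_combination (2 * (2 * n + 1) * 2 ^ k * n.centralBinom : ℚ) * hb -
    ((k + 1 + n + k + 1) * 2 ^ k * (k + 1 + n + k).choose k : ℚ) * hc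

def bmCert (m j k : ℕ) : ℚ := bmTerm m k * k.choose (j + 1) * (j + 1) * (2 * m + 1 - 2 * k)

theorem bmCert_succ {m k : ℕ} (j : ℕ) (hk : k < m) :
    bmCert m j (k + 1) = (m - k) * (m + k + 1) * bmTerm m k * k.choose j := by
  have hc : ((k + 1).choose (j + 1) : ℚ) * (j + 1) = (k + 1) * k.choose j := by
    exact_mod_cast (Nat.add_one_mul_choose_eq k j).symm
  rw [bmCert, ← bmTerm_succ hk]
  push_cast
  linear_combination (2 * m - 2 * k - 1 : ℚ) * bmTerm m (k + 1) * hc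

theorem bmSum_recurrence (m j : ℕ) :
    ((j : ℚ) + 1) * (j + 2) * bmSum m (j + 2) + (m - j) * (m + j + 1) * bmSum m j =
      (2 * m + 1) * (j + 1) * bmSum m (j + 1) := by
  have htelescope : ∑ k ∈ range (m + 1), (m - k) * (m + k + 1) * bmTerm m k * k.choose j =
      ∑ k ∈ range (m + 1), bmCert m j k := by
    rw [sum_range_succ, sum_range_succ']
    simp only [sub_self, zero_mul, add_zero, bmCert, Nat.choose_zero_succ, Nat.cast_zero, mul_zero]
    exact sum_congr rfl fun k hk => (bmCert_succ j (mem_range.1 hk)).symm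
  rw [← sub_eq_zero, bmSum, bmSum, bmSum, mul_sum, mul_sum, mul_sum, ← sum_add_distrib,
    ← sum_sub_distrib]
  calc _ = ∑ k ∈ range (m + 1),
          ((m - k) * (m + k + 1) * bmTerm m k * k.choose j - bmCert m j k) :=
        sum_congr rfl fun k _ => by
          rw [bmCert]
          linear_combination bmTerm m k * cast_choose_three_term_eq (R := ℚ) m j k
    _ = 0 := by rw [sum_sub_distrib, htelescope, sub_self]

open Nat in
theorem bmD_eq_mul_bmCoeff (m j : ℕ) :
    bmD m j = (2 * m)! * m ! * 2 ^ j * j ! / (m + j)! * bmCoeff m j := by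
  rcases le_or_gt j m with h | h
  · have hf : ((2 * m).choose (m - j) : ℚ) * (m - j)! * (m + j)! = (2 * m)! := by
      rw [show m + j = 2 * m - (m - j) by omega]
      exact_mod_cast choose_mul_factorial_mul_factorial (by omega)
    rw [bmD, ← hf]
    field_simp
  · simp [bmD, bmCoeff, Icc_eq_empty_of_lt h]

theorem bmD_recurrence_general (m i : ℕ) (hi1 : 1 ≤ i) :
    (1/2 : ℚ) * ((m:ℚ)+i+1) * bmD m (i+1) + 2 * ((m:ℚ)-i+1) * bmD m (i-1) =
      (2*(m:ℚ)+1) * bmD m i := by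
  obtain ⟨j, rfl⟩ : ∃ j, i = j + 1 := ⟨i - 1, by omega⟩
  rw [show j + 1 + 1 = j + 2 from rfl]
  simp only [add_tsub_cancel_right, bmD_eq_mul_bmCoeff, bmCoeff_eq_bmSum, ← add_assoc,
    Nat.factorial_succ]
  push_cast
  field_simp
  linear_combination 4 * 2 ^ j * ((m : ℚ) + j + 2) * bmSum_recurrence m j

theorem bmD_recurrence (m i : ℕ) (hm : 1 ≤ m) (hi1 : 1 ≤ i) (hi2 : i ≤ m - 1) :
    (1/2 : ℚ) * ((m:ℚ)+i+1) * bmD m (i+1) + 2 * ((m:ℚ)-i+1) * bmD m (i-1) =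
      (2*(m:ℚ)+1) * bmD m i :=
  bmD_recurrence_general m i hi1
end

section
/- For m ≥ 1 and 0 ≤ i ≤ m-1, the sequence d_i(m) is positive, and moreover m! i! (m-i)! 2^i d_i(m) = ∑_{j=0}^{m-i} C(m-i, j) (1/2)^j (1/2)_{m-i-j} (m+i+j)!, so that m! i! (m-i)! 2^i d_i(m) is a positive rational number with 2-power denominator at most 2^{m-i}. -/
open Finset

open Nat

/-!
Put `k = i + j` and `m = i + j + a`. The `k`-th summand of `m! i! (m-i)! 2^i d_i(m)` turns into
the `j`-th term of the right-hand side once both half-integer quantities are written through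
the odd double factorial: `C(2a, a) a! = 2^a (2a-1)!!` and `2^a (1/2)_a = (2a-1)!!`. The second
identity also shows that `2^(m-i)` clears every denominator, leaving the positive integer
`∑ C(m-i, j) (2(m-i-j)-1)!! (m+i+j)!`.
-/

theorem two_pow_mul_ascPochhammer_eval_half (n : ℕ) :
    (2 : ℚ) ^ n * (ascPochhammer ℚ n).eval (1 / 2) = (2 * n - 1)‼ := by
  induction n with
  | zero => simp
  | succ n ih =>
    rw [ascPochhammer_succ_eval, show 2 * (n + 1) - 1 = 2 * n + 1 by omega,
      doubleFactorial_add_one, pow_succ]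
    push_cast
    rw [← ih]
    ring

theorem factorial_two_mul_eq (n : ℕ) : (2 * n)! = 2 ^ n * n ! * (2 * n - 1)‼ := by
  rcases n with _ | n
  · rfl
  rw [show 2 * (n + 1) = 2 * n + 1 + 1 by omega, factorial_eq_mul_doubleFactorial,
    show 2 * n + 1 + 1 = 2 * (n + 1) by omega, doubleFactorial_two_mul,
    show 2 * (n + 1) - 1 = 2 * n + 1 by omega]

theorem choose_two_mul_self_mul_factorial (n : ℕ) :
    (2 * n).choose n * n ! = 2 ^ n * (2 * n - 1)‼ := by
  have h := choose_mul_factorial_mul_factorial (show n ≤ 2 * n by omega)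
  rw [show 2 * n - n = n by omega, factorial_two_mul_eq] at h
  exact Nat.eq_of_mul_eq_mul_right (factorial_pos n) (by rw [h]; ring)

theorem bmCoeff_eq_sum_range {m i : ℕ} (h : i ≤ m) :
    bmCoeff m i = ∑ j ∈ range (m - i + 1),
      (2 : ℚ) ^ (i + j) * (2 * m - 2 * (i + j)).choose (m - (i + j))
        * (m + (i + j)).choose (i + j) * (i + j).choose i / 2 ^ (2 * m) := by
  rw [bmCoeff, ← Ico_add_one_right_eq_Icc, sum_Ico_eq_sum_range,
    show m + 1 - i = m - i + 1 by omega, sum_div]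

theorem bmCoeff_pos {m i : ℕ} (h : i ≤ m) : 0 < bmCoeff m i := by
  refine div_pos (sum_pos' (fun k _ => by positivity) ⟨m, by simp [h], ?_⟩) (by positivity)
  have := choose_pos h
  have := choose_pos (show m ≤ m + m by omega)
  simp only [Nat.sub_self, choose_self]
  positivity

theorem factorial_mul_bmCoeff_summand {m i j : ℕ} (h : i + j ≤ m) :
    (m ! * i ! * (m - i)! * 2 ^ i : ℚ) *
      ((2 : ℚ) ^ (i + j) * (2 * m - 2 * (i + j)).choose (m - (i + j))
        * (m + (i + j)).choose (i + j) * (i + j).choose i / 2 ^ (2 * m)) =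
    (m - i).choose j * (1 / 2) ^ j * (ascPochhammer ℚ (m - i - j)).eval (1 / 2) * (m + i + j)! := by
  obtain ⟨a, rfl⟩ : ∃ a, m = i + j + a := ⟨m - i - j, by omega⟩
  have hc : ((2 * a).choose a : ℚ) = 2 ^ a * (2 * a - 1)‼ / a ! := by
    rw [eq_div_iff (by positivity)]; exact_mod_cast choose_two_mul_self_mul_factorial a
  have hp : (ascPochhammer ℚ a).eval (1 / 2) = (2 * a - 1)‼ / 2 ^ a := by
    rw [eq_div_iff (by positivity), mul_comm]; exact two_pow_mul_ascPochhammer_eval_half a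
  rw [show 2 * (i + j + a) - 2 * (i + j) = 2 * a by omega, show i + j + a - (i + j) = a by omega,
    show i + j + a - i - j = a by omega, show i + j + a - i = j + a by omega,
    show i + j + a + i + j = i + j + a + (i + j) by omega, hc, hp,
    cast_choose ℚ (show i + j ≤ i + j + a + (i + j) by omega), cast_choose ℚ (le_add_right i j),
    cast_choose ℚ (le_add_right j a), show i + j + a + (i + j) - (i + j) = i + j + a by omega,
    Nat.add_sub_cancel_left, Nat.add_sub_cancel_left,
    show 2 * (i + j + a) = i + i + j + j + a + a by omega]
  simp only [pow_add, one_div, inv_pow]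
  field_simp

theorem factorial_mul_bmCoeff_eq_sum {m i : ℕ} (h : i ≤ m) :
    (m ! * i ! * (m - i)! * 2 ^ i : ℚ) * bmCoeff m i =
      ∑ j ∈ range (m - i + 1),
        ((m - i).choose j : ℚ) * (1 / 2) ^ j * (ascPochhammer ℚ (m - i - j)).eval (1 / 2) *
          (m + i + j)! := by
  rw [bmCoeff_eq_sum_range h, mul_sum]
  exact sum_congr rfl fun j hj => factorial_mul_bmCoeff_summand (by have := mem_range.mp hj; omega)

theorem two_pow_mul_sum_ascPochhammer_eval_half (n p : ℕ) :
    (2 : ℚ) ^ n * ∑ j ∈ range (n + 1),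
        (n.choose j : ℚ) * (1 / 2) ^ j * (ascPochhammer ℚ (n - j)).eval (1 / 2) * (p + j)! =
      ((∑ j ∈ range (n + 1), n.choose j * (2 * (n - j) - 1)‼ * (p + j)! : ℕ) : ℚ) := by
  push_cast
  rw [mul_sum]
  refine sum_congr rfl fun j hj => ?_
  have hsplit : (2 : ℚ) ^ n = 2 ^ (n - j) * 2 ^ j := by
    rw [← pow_add, Nat.sub_add_cancel (by have := mem_range.mp hj; omega)]
  rw [hsplit, ← two_pow_mul_ascPochhammer_eval_half, one_div, inv_pow]
  field_simp

theorem bmCoeff_pos_and_denom_general (m i : ℕ) (hi : i ≤ m - 1) :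
    0 < bmCoeff m i ∧
    (Nat.factorial m : ℚ) * Nat.factorial i * Nat.factorial (m-i) * 2^i * bmCoeff m i =
      ∑ j ∈ Finset.range (m-i+1),
        (Nat.choose (m-i) j : ℚ) * (1/2)^j *
          (ascPochhammer ℚ (m-i-j)).eval (1/2) * (Nat.factorial (m+i+j)) ∧
    ∃ N : ℕ, 0 < N ∧
      (2:ℚ)^(m-i) * ((Nat.factorial m : ℚ) * Nat.factorial i * Nat.factorial (m-i)
        * 2^i * bmCoeff m i) = N := by
  have him : i ≤ m := hi.trans (Nat.sub_le m 1)
  refine ⟨bmCoeff_pos him, factorial_mul_bmCoeff_eq_sum him, ?_⟩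
  rw [factorial_mul_bmCoeff_eq_sum him, two_pow_mul_sum_ascPochhammer_eval_half]
  refine ⟨_, sum_pos' (fun _ _ => Nat.zero_le _) ⟨0, by simp, ?_⟩, rfl⟩
  exact Nat.mul_pos (Nat.mul_pos (choose_pos (Nat.zero_le _)) (doubleFactorial_pos _))
    (factorial_pos _)

theorem bmCoeff_pos_and_denom (m i : ℕ) (hm : 1 ≤ m) (hi : i ≤ m - 1) :
    0 < bmCoeff m i ∧
    (Nat.factorial m : ℚ) * Nat.factorial i * Nat.factorial (m-i) * 2^i * bmCoeff m i =
      ∑ j ∈ Finset.range (m-i+1),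
        (Nat.choose (m-i) j : ℚ) * (1/2)^j *
          (ascPochhammer ℚ (m-i-j)).eval (1/2) * (Nat.factorial (m+i+j)) ∧
    ∃ N : ℕ, 0 < N ∧
      (2:ℚ)^(m-i) * ((Nat.factorial m : ℚ) * Nat.factorial i * Nat.factorial (m-i)
        * 2^i * bmCoeff m i) = N :=
  bmCoeff_pos_and_denom_general m i hi
end
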